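/- arXiv:2302.06064 — 5 statements merged into one kernel-verified Lean document; each statement's English description precedes it below -/
import Mathlib

section
/- If Q ≥ 4 and c ≥ 4 (log(4c))^2 + 6, then Q · (log(4 c Q (log Q)^2))^2 ≤ c · Q · (log Q)^2. -/
/-- If Q ≥ 4 and c ≥ 4 (log(4c))² + 6 then
Q·(log(4cQ(log Q)²))² ≤ c·Q·(log Q)². -/
theorem stmt_1 (Q c : ℝ) (hQ : 4 ≤ Q) (hc : 4 * (Real.log (4 * c)) ^ 2 + 6 ≤ c) :
    Q * (Real.log (4 * c * Q * (Real.log Q) ^ 2)) ^ 2 ≤ c * Q * (Real.log Q) ^ 2 := by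
  have hc6 : (6:ℝ) ≤ c := by nlinarith [sq_nonneg (Real.log (4*c))]
  have hQ0 : (0:ℝ) < Q := by linarith
  have h4c : (0:ℝ) < 4*c := by linarith
  have hexp1 : Real.exp 1 < 2.7182818286 := Real.exp_one_lt_d9
  set L := Real.log Q with hLdef
  set a := Real.log (4*c) with hadef
  have hL1 : 1 ≤ L := by
    have h1 : Real.exp 1 ≤ 4 := by nlinarith [Real.exp_pos 1]
    have : (1:ℝ) ≤ Real.log 4 := by
      rw [Real.le_log_iff_exp_le (by norm_num : (0:ℝ) < 4)]
      exact h1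
    have h2 : Real.log 4 ≤ Real.log Q := Real.log_le_log (by norm_num) hQ
    linarith
  have hL0 : (0:ℝ) < L := by linarith
  have ha3 : 3 ≤ a := by
    rw [hadef, Real.le_log_iff_exp_le h4c]
    have h3 : Real.exp 3 = Real.exp 1 ^ (3:ℕ) := by
      rw [← Real.exp_nat_mul]; norm_num
    have hcube : Real.exp 1 ^ (3:ℕ) ≤ (2.7182818286:ℝ) ^ (3:ℕ) :=
      pow_le_pow_left₀ (Real.exp_pos 1).le hexp1.le 3
    have : (2.7182818286:ℝ) ^ (3:ℕ) ≤ 24 := by norm_num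
    linarith
  have hsplit : Real.log (4 * c * Q * L ^ 2) = a + L + 2 * Real.log L := by
    rw [Real.log_mul (by positivity) (by positivity),
        Real.log_mul (by positivity) (by positivity), Real.log_pow]
    push_cast
    ring
  have hlogL0 : 0 ≤ Real.log L := Real.log_nonneg hL1
  have hlogL : Real.log L ≤ L - 1 := Real.log_le_sub_one_of_pos hL0
  have hA0 : 0 ≤ a + L + 2 * Real.log L := by linarith
  have key : (a + L + 2 * Real.log L) ^ 2 ≤ c * L ^ 2 := by
    have hub : a + L + 2 * Real.log L ≤ a + 3 * L - 2 := by linarith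
    have h1 : (a + L + 2 * Real.log L) ^ 2 ≤ (a + 3 * L - 2) ^ 2 := by
      apply sq_le_sq' <;> nlinarith
    have ha0 : (0:ℝ) ≤ a := by linarith
    have hx1 : a ≤ a * L := by nlinarith
    have hx2 : 3 * L ≤ a * L := by nlinarith
    have hx3 : 3 ≤ a * L := by nlinarith
    nlinarith [sq_nonneg (a*L - 3), mul_le_mul hx1 hx1 ha0 (by nlinarith : (0:ℝ) ≤ a*L),
      mul_le_mul hx2 hx2 (by linarith) (by nlinarith : (0:ℝ) ≤ a*L)]
  rw [hsplit]
  calc Q * (a + L + 2 * Real.log L) ^ 2 ≤ Q * (c * L ^ 2) :=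
        mul_le_mul_of_nonneg_left key (le_of_lt hQ0)
    _ = c * Q * L ^ 2 := by ring
end

section
/- Suppose two recursively-defined families satisfy: U'_H ⊆ U_H, Δ'_h(s,a) ⊆ Δ_h(s,a) for all h,s,a, and U'_h = U'_{h+1} ∪ {s : ∀a, Δ'_h(s,a) ∩ U'_{h+1} ≠ ∅}, U_h = U_{h+1} ∪ {s : ∀a, Δ_h(s,a) ∩ U_{h+1} ≠ ∅}. Then U'_h ⊆ U_h for all h ∈ [H], and consequently A_h^{safe}(s) := {a : Δ_h(s,a) ∩ U_{h+1} = ∅} ⊆ {a : Δ'_h(s,a) ∩ U'_{h+1} = ∅} =: A'^{safe}_h(s) for every state s. -/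
/-- Optimism of the SUCBVI dynamic programming: if U'_H ⊆ U_H and
Δ'_h(s,a) ⊆ Δ_h(s,a), then U'_h ⊆ U_h for all h, and the true safe action
sets are contained in the estimated ones. -/
theorem stmt_11 (S A : Type*) (H : ℕ)
    (Δ Δ' : ℕ → S → A → Set S) (U U' : ℕ → Set S)
    (hUH : U' H ⊆ U H)
    (hΔ : ∀ h s a, Δ' h s a ⊆ Δ h s a)
    (hrec' : ∀ h, h < H →
      U' h = U' (h + 1) ∪ {s | ∀ a : A, (Δ' h s a ∩ U' (h + 1)).Nonempty})
    (hrec : ∀ h, h < H →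
      U h = U (h + 1) ∪ {s | ∀ a : A, (Δ h s a ∩ U (h + 1)).Nonempty}) :
    (∀ h, h ≤ H → U' h ⊆ U h) ∧
    (∀ h, h < H → ∀ s : S,
      {a : A | Δ h s a ∩ U (h + 1) = ∅} ⊆ {a : A | Δ' h s a ∩ U' (h + 1) = ∅}) := by
  have key : ∀ k, k ≤ H → U' (H - k) ⊆ U (H - k) := by
    intro k
    induction k with
    | zero => intro _; simpa using hUH
    | succ n ih =>
      intro hk
      have hn : n ≤ H := Nat.le_of_succ_le hk
      have ihn := ih hn
      have hlt : H - (n + 1) < H := by omega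
      have heq : H - (n + 1) + 1 = H - n := by omega
      rw [hrec' _ hlt, hrec _ hlt, heq]
      intro s hs
      rcases hs with hs | hs
      · exact Or.inl (ihn hs)
      · right
        intro a
        obtain ⟨x, hx1, hx2⟩ := hs a
        exact ⟨x, hΔ _ _ _ hx1, ihn hx2⟩
  have main : ∀ h, h ≤ H → U' h ⊆ U h := by
    intro h hh
    have := key (H - h) (Nat.sub_le _ _)
    rwa [Nat.sub_sub_self hh] at this
  refine ⟨main, ?_⟩
  intro h hh s a ha
  simp only [Set.mem_setOf_eq] at ha ⊢
  rw [Set.eq_empty_iff_forall_notMem] at ha ⊢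
  intro x ⟨hx1, hx2⟩
  exact ha x ⟨hΔ _ _ _ hx1, main (h + 1) hh hx2⟩
end

section
/- Consider an episodic MDP with horizon H and the recursively defined potentially-unsafe sets U_h (U_H = U, U_h = U_{h+1} ∪ {s : ∀a, supp P_h(·|s,a) ∩ U_{h+1} ≠ ∅}). If the initial state s_1 ∉ U_1, then there exists a policy π (a map from steps and states to actions) such that, starting from s_1 and following π, with probability 1 the trajectory never visits any state in U at any step h ∈ [H]. -/
/-- If s₁ ∉ U₁ (the recursively defined potentially-unsafe set at step 1),
then there is a policy π such that every trajectory starting at s₁ that is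
consistent with π and the transition kernels (each transition has positive
probability) never visits an unsafe state at any step h ∈ [H];
i.e. with probability 1 the unsafe set is avoided. -/
theorem stmt_12 (S A : Type*) [Fintype S] [Nonempty A] (H : ℕ)
    (P : ℕ → S → A → S → ℝ)
    (hP0 : ∀ h s a s', 0 ≤ P h s a s')
    (hP1 : ∀ h s a, ∑ s', P h s a s' = 1)
    (Uset : Set S) (U : ℕ → Set S)
    (hUH : U H = Uset)
    (hrec : ∀ h, h < H →
      U h = U (h + 1) ∪
        {s | ∀ a : A, ({s' | 0 < P h s a s'} ∩ U (h + 1)).Nonempty})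
    (s₁ : S) (hs₁ : s₁ ∉ U 1) :
    ∃ π : ℕ → S → A,
      ∀ traj : ℕ → S, traj 1 = s₁ →
        (∀ h, 1 ≤ h → h < H →
          0 < P h (traj h) (π h (traj h)) (traj (h + 1))) →
        ∀ h, 1 ≤ h → h ≤ H → traj h ∉ Uset := by
  classical
  -- U is antitone on [·, H]
  have hmono : ∀ h, h ≤ H → U H ⊆ U h := by
    intro h hh
    induction' hn : H - h with k ih generalizing h
    · have : h = H := by omega
      subst this; exact subset_rfl
    · have hhH : h < H := by omega
      have h1 : U H ⊆ U (h + 1) := ih (h + 1) (by omega) (by omega)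
      rw [hrec h hhH]
      exact h1.trans (Set.subset_union_left)
  -- the policy
  set π : ℕ → S → A := fun h s =>
    if hx : ∃ a : A, ({s' | 0 < P h s a s'} ∩ U (h + 1)) = ∅ then hx.choose
    else Classical.arbitrary A with hπ
  refine ⟨π, ?_⟩
  intro traj h1 hcons
  have key : ∀ h, 1 ≤ h → h ≤ H → traj h ∉ U h := by
    intro h hh
    induction' hh with h hh ih
    · intro _; rw [h1]; exact hs₁
    · intro hh1
      have hhH : h < H := by omega
      have hnot : traj h ∉ U h := ih (by omega)
      rw [hrec h hhH] at hnot
      rw [Set.mem_union] at hnot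
      push_neg at hnot
      obtain ⟨hn1, hn2⟩ := hnot
      simp only [Set.mem_setOf_eq, not_forall] at hn2
      obtain ⟨a, ha⟩ := hn2
      have hex : ∃ a : A, ({s' | 0 < P h (traj h) a s'} ∩ U (h + 1)) = ∅ := by
        exact ⟨a, Set.not_nonempty_iff_eq_empty.mp ha⟩
      have hch : ({s' | 0 < P h (traj h) (π h (traj h)) s'} ∩ U (h + 1)) = ∅ := by
        rw [hπ]; simp only [hex, dif_pos]; exact hex.choose_spec
      have hp : 0 < P h (traj h) (π h (traj h)) (traj (h + 1)) :=
        hcons h hh hhH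
      intro hmem
      have : traj (h + 1) ∈ ({s' | 0 < P h (traj h) (π h (traj h)) s'} ∩ U (h + 1)) :=
        ⟨hp, hmem⟩
      rw [hch] at this
      exact this
  intro h hh1 hhH hmem
  exact key h hh1 hhH (hmono h hhH (hUH ▸ hmem))
end

section
/- Let c : S → [0,1], τ ∈ [0,1], and suppose min_{s : c(s) > τ} (c(s) − τ) = d > 0. If for a state s visited N times we have c(s) − τ ≤ 2 sqrt(2 log(SK/δ)/N), then whenever c(s) > τ, N ≤ 8 log(SK/δ) / d^2. Consequently the total violation Σ over visits to such states of (c(s) − τ)_+ is at most (8 S / d) log(SK/δ). -/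
/-- Gap-dependent violation bound: if every unsafe state has gap at least
d > 0 and each state s with N(s) visits satisfies
c(s) − τ ≤ 2√(2 log(SK/δ)/N(s)), then every unsafe state satisfies
N(s) ≤ 8 log(SK/δ)/d², and the total violation ∑_s N(s)·(c(s)−τ)₊ is at
most (8S/d)·log(SK/δ). -/
theorem stmt_16 (𝒮 : Type*) [Fintype 𝒮] (c : 𝒮 → ℝ) (τ d δ : ℝ) (K : ℕ)
    (hc : ∀ s, c s ∈ Set.Icc (0 : ℝ) 1) (hτ : τ ∈ Set.Icc (0 : ℝ) 1)
    (hd : 0 < d) (hgap : ∀ s, τ < c s → d ≤ c s - τ)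
    (hδ0 : 0 < δ) (hδ1 : δ < 1) (hK : 1 ≤ K)
    (N : 𝒮 → ℕ)
    (hconf : ∀ s, c s - τ ≤
      2 * Real.sqrt (2 * Real.log ((Fintype.card 𝒮 : ℝ) * K / δ) / N s)) :
    (∀ s, τ < c s →
      (N s : ℝ) ≤ 8 * Real.log ((Fintype.card 𝒮 : ℝ) * K / δ) / d ^ 2) ∧
    ∑ s, (N s : ℝ) * max (c s - τ) 0
      ≤ (8 * (Fintype.card 𝒮 : ℝ) / d) *
          Real.log ((Fintype.card 𝒮 : ℝ) * K / δ) := by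
  set L := Real.log ((Fintype.card 𝒮 : ℝ) * K / δ) with hLdef
  rcases isEmpty_or_nonempty 𝒮 with hS | hS
  · refine ⟨fun s => (IsEmpty.false s).elim, ?_⟩
    simp [Fintype.card_eq_zero, hLdef]
  · have hcard : (1:ℝ) ≤ (Fintype.card 𝒮 : ℝ) := by exact_mod_cast Fintype.card_pos
    have hKr : (1:ℝ) ≤ (K:ℝ) := by exact_mod_cast hK
    have hx : (1:ℝ) ≤ (Fintype.card 𝒮 : ℝ) * K / δ := by
      rw [le_div_iff₀ hδ0]
      nlinarith
    have hL0 : 0 ≤ L := Real.log_nonneg hx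
    have key : ∀ s, τ < c s → (N s : ℝ) * (c s - τ)^2 ≤ 8 * L := by
      intro s hs
      have hcs : d ≤ c s - τ := hgap s hs
      have hN : c s - τ ≤ 2 * Real.sqrt (2 * L / N s) := hconf s
      have hNpos : (0:ℝ) < N s := by
        by_contra h
        push_neg at h
        have h0 : (N s : ℝ) = 0 := le_antisymm h (Nat.cast_nonneg _)
        rw [h0] at hN
        simp at hN
        linarith
      have h1 : (c s - τ)^2 ≤ (2 * Real.sqrt (2 * L / N s))^2 := by
        apply sq_le_sq' <;> nlinarith [Real.sqrt_nonneg (2*L/(N s : ℝ))]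
      rw [mul_pow, Real.sq_sqrt (by positivity)] at h1
      have h2 : (N s : ℝ) * (c s - τ)^2 ≤ (N s : ℝ) * (2^2 * (2 * L / N s)) := by
        nlinarith
      calc (N s : ℝ) * (c s - τ)^2 ≤ (N s : ℝ) * (2^2 * (2 * L / N s)) := h2
        _ = 8 * L := by field_simp; ring
    constructor
    · intro s hs
      have hcs := hgap s hs
      have hk := key s hs
      rw [le_div_iff₀ (by positivity)]
      have hd2 : d^2 ≤ (c s - τ)^2 := pow_le_pow_left₀ hd.le hcs 2
      nlinarith [mul_le_mul_of_nonneg_left hd2 (show (0:ℝ) ≤ (N s : ℝ) from Nat.cast_nonneg _)]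
    · have hterm : ∀ s ∈ Finset.univ, (N s : ℝ) * max (c s - τ) 0 ≤ 8*L/d := by
        intro s _
        rcases le_or_gt (c s) τ with h | h
        · rw [max_eq_right (by linarith)]
          rw [mul_zero]
          positivity
        · rw [max_eq_left (by linarith)]
          have hcs := hgap s h
          have hk := key s h
          rw [le_div_iff₀ hd]
          nlinarith [show (0:ℝ) ≤ (N s : ℝ) from Nat.cast_nonneg _]
      calc ∑ s, (N s:ℝ) * max (c s - τ) 0
          ≤ Finset.univ.card • (8*L/d) := Finset.sum_le_card_nsmul _ _ _ hterm
        _ = (8 * (Fintype.card 𝒮 : ℝ) / d) * L := by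
            simp [Finset.card_univ, nsmul_eq_mul]
            ring
end

section
/- Define recursively (backward in h from H+1 to 1) two functions with F_{H+1} = G_{H+1} = 0, and for each h: F_h(s,a) = min{H, c_h(s,a) + b'_h(s,a) + Σ_{s'} P̂_h(s'|s,a) F_{h+1}(s', π_{h+1}(s'))} and G_h(s,a) = min{H, c_h(s,a) + Σ_{s'} P_h(s'|s,a) G_{h+1}(s', π_{h+1}(s'))}, where c_h(s,a) ≥ 0 and for all (s,a): H · ||P̂_h(·|s,a) − P_h(·|s,a)||_1 ≤ b'_h(s,a). Then F_h(s,a) ≥ G_h(s,a) for all h, s, a. -/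
/-- The empirical uncertainty function dominates the true one: if F uses the
empirical kernel P̂ with bonus c + b' where H·‖P̂(·|s,a) − P(·|s,a)‖₁ ≤ b',
and G uses the true kernel P with bonus c only, both truncated at H and with
F_{H+1} = G_{H+1} = 0, then F_h(s,a) ≥ G_h(s,a) for all h, s, a. -/
theorem stmt_18 (S A : Type*) [Fintype S] (H : ℕ) (π : ℕ → S → A)
    (Phat P : ℕ → S → A → S → ℝ) (c b' : ℕ → S → A → ℝ)
    (F G : ℕ → S → A → ℝ)
    (hPhat0 : ∀ h s a s', 0 ≤ Phat h s a s')
    (hP0 : ∀ h s a s', 0 ≤ P h s a s')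
    (hP1 : ∀ h s a, ∑ s', P h s a s' = 1)
    (hc0 : ∀ h s a, 0 ≤ c h s a) (hb'0 : ∀ h s a, 0 ≤ b' h s a)
    (hl1 : ∀ h s a,
      (H : ℝ) * ∑ s', |Phat h s a s' - P h s a s'| ≤ b' h s a)
    (hFtop : ∀ s a, F (H + 1) s a = 0) (hGtop : ∀ s a, G (H + 1) s a = 0)
    (hFrec : ∀ h, 1 ≤ h → h ≤ H → ∀ s a,
      F h s a = min (H : ℝ)
        (c h s a + b' h s a +
          ∑ s', Phat h s a s' * F (h + 1) s' (π (h + 1) s')))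
    (hGrec : ∀ h, 1 ≤ h → h ≤ H → ∀ s a,
      G h s a = min (H : ℝ)
        (c h s a + ∑ s', P h s a s' * G (h + 1) s' (π (h + 1) s'))) :
    ∀ h, 1 ≤ h → h ≤ H + 1 → ∀ s a, G h s a ≤ F h s a := by
  have key : ∀ d h, h + d = H + 1 → 1 ≤ h → ∀ s a,
      0 ≤ G h s a ∧ G h s a ≤ (H : ℝ) ∧ G h s a ≤ F h s a := by
    intro d
    induction d with
    | zero =>
      intro h hh _ s a
      have : h = H + 1 := by omega
      subst this
      rw [hGtop, hFtop]
      exact ⟨le_refl _, Nat.cast_nonneg _, le_refl _⟩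
    | succ d ih =>
      intro h hh h1 s a
      have hle : h ≤ H := by omega
      have ih' := fun s a => ih (h + 1) (by omega) (by omega) s a
      rw [hGrec h h1 hle s a, hFrec h h1 hle s a]
      have hsum0 : 0 ≤ ∑ s', P h s a s' * G (h + 1) s' (π (h + 1) s') :=
        Finset.sum_nonneg fun s' _ =>
          mul_nonneg (hP0 h s a s') (ih' s' (π (h + 1) s')).1
      refine ⟨le_min (Nat.cast_nonneg _) (add_nonneg (hc0 h s a) hsum0),
        min_le_left _ _, min_le_min (le_refl _) ?_⟩
      have step : ∑ s', P h s a s' * G (h + 1) s' (π (h + 1) s') ≤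
          b' h s a + ∑ s', Phat h s a s' * F (h + 1) s' (π (h + 1) s') := by
        have h1' : ∑ s', P h s a s' * G (h + 1) s' (π (h + 1) s') ≤
            (∑ s', |Phat h s a s' - P h s a s'| * (H : ℝ)) +
            ∑ s', Phat h s a s' * G (h + 1) s' (π (h + 1) s') := by
          rw [← Finset.sum_add_distrib]
          refine Finset.sum_le_sum fun s' _ => ?_
          have hG := ih' s' (π (h + 1) s')
          have habs : P h s a s' - Phat h s a s' ≤ |Phat h s a s' - P h s a s'| := by
            rw [abs_sub_comm]; exact le_abs_self _
          have habs0 : (0:ℝ) ≤ |Phat h s a s' - P h s a s'| := abs_nonneg _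
          nlinarith [hG.1, hG.2.1]
        have h2' : ∑ s', |Phat h s a s' - P h s a s'| * (H : ℝ) ≤ b' h s a := by
          rw [← Finset.sum_mul, mul_comm]
          exact hl1 h s a
        have h3' : ∑ s', Phat h s a s' * G (h + 1) s' (π (h + 1) s') ≤
            ∑ s', Phat h s a s' * F (h + 1) s' (π (h + 1) s') :=
          Finset.sum_le_sum fun s' _ =>
            mul_le_mul_of_nonneg_left (ih' s' (π (h + 1) s')).2.2 (hPhat0 h s a s')
        linarith
      linarith
  intro h h1 hH s a
  exact (key (H + 1 - h) h (by omega) h1 s a).2.2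
end
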